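/- Let z_1,…,z_n ∈ ℝ^d satisfy 1/2 ≤ ‖z_j‖₂ ≤ 2 for all j, let z̄_j = z_j/‖z_j‖₂, let γ > 0, and fix an index i. Let a_1,…,a_n ∈ ℝ and let w be a random vector distributed according to μ. If μ(W_i) > 0, then the conditional probability satisfies P(‖h(w)‖₂ ≥ |a_i|/4 | w ∈ W_i) ≥ 1/2. -/

import Mathlib

/-!
Let `σ` be the reflection across `z̄_iᗮ`. It preserves the Gaussian measure and the set `W_i`.
For `w ∈ W_i` and `j ≠ i` it turns `⟪w, z̄_j⟫ = t + s` into `t - s`, where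
`t = ⟪w - ⟪w, z̄_i⟫ z̄_i, z̄_j⟫` and `s = ⟪w, z̄_i⟫ ⟪z̄_i, z̄_j⟫` satisfy `|s| ≤ γ < 2γ ≤ |t|`. So every
activation `j ≠ i` agrees at `w` and `σ w`. The `i`-th one flips, because
`⟪σ w, z_i⟫ = -⟪w, z_i⟫ ≠ 0` almost surely. Hence `h(w) - h(σ w) = ± a_i z_i` has norm at least
`|a_i| / 2`, so `w` or `σ w` lies in `A = {‖h‖ ≥ |a_i| / 4}`. This gives
`μ(W_i) ≤ μ(W_i ∩ A) + μ(σ⁻¹(W_i ∩ A)) = 2 μ(W_i ∩ A)`.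
-/

open MeasureTheory ProbabilityTheory Real RealInnerProductSpace

/-- The standard Gaussian measure on `ℝ^d`: the `d`-fold product of `N(0,1)`. -/
noncomputable def stdGaussian (d : ℕ) : Measure (EuclideanSpace ℝ (Fin d)) :=
  (Measure.pi fun _ : Fin d => gaussianReal 0 1).map
    (MeasurableEquiv.toLp 2 (Fin d → ℝ))

/-- The set `W_i = {w : |⟨w, z̄_i⟩| ≤ γ, and |⟨w − ⟨w, z̄_i⟩ z̄_i, z̄_j⟩| ≥ 2γ for all j ≠ i}`. -/
def sepSet {d n : ℕ} (zbar : Fin n → EuclideanSpace ℝ (Fin d)) (γ : ℝ) (i : Fin n) :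
    Set (EuclideanSpace ℝ (Fin d)) :=
  {w | |⟪w, zbar i⟫| ≤ γ ∧ ∀ j, j ≠ i → 2 * γ ≤ |⟪w - ⟪w, zbar i⟫ • zbar i, zbar j⟫|}

/-- `h(w) = Σ_j a_j · 1{⟨w, z_j⟩ ≥ 0} · z_j`, the ReLU-gradient sum. -/
noncomputable def reluSum {d n : ℕ} (a : Fin n → ℝ) (z : Fin n → EuclideanSpace ℝ (Fin d))
    (w : EuclideanSpace ℝ (Fin d)) : EuclideanSpace ℝ (Fin d) :=
  ∑ j, (a j * if 0 ≤ ⟪w, z j⟫ then 1 else 0) • z j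

lemma stdGaussian_eq (d : ℕ) :
    stdGaussian d = ProbabilityTheory.stdGaussian (EuclideanSpace ℝ (Fin d)) := by
  rw [_root_.stdGaussian, MeasurableEquiv.coe_toLp, map_pi_eq_stdGaussian]

lemma measure_le_two_mul_of_ae_mem_or_mem {α : Type*} [MeasurableSpace α] {μ : Measure α}
    {σ : α → α} (hσ : MeasurePreserving σ μ μ) {s t : Set α} (ht : NullMeasurableSet t μ)
    (h : ∀ᵐ x ∂μ, x ∈ s → x ∈ t ∨ σ x ∈ t) : μ s ≤ 2 * μ t :=
  calc μ s ≤ μ (t ∪ σ ⁻¹' t) := measure_mono_ae h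
    _ ≤ μ t + μ (σ ⁻¹' t) := measure_union_le _ _
    _ = 2 * μ t := by rw [hσ.measure_preimage ht, two_mul]

lemma inv_le_cond_of_le_mul {α : Type*} [MeasurableSpace α] {μ : Measure α} {s t : Set α}
    (hs : MeasurableSet s) (hs0 : μ s ≠ 0) (hs_top : μ s ≠ ⊤) {c : ENNReal}
    (h : μ s ≤ c * μ (s ∩ t)) : c⁻¹ ≤ μ[t|s] := by
  rw [cond_apply hs, ← ENNReal.div_eq_inv_mul,
    ENNReal.le_div_iff_mul_le (.inl hs0) (.inl hs_top)]
  calc c⁻¹ * μ s ≤ c⁻¹ * (c * μ (s ∩ t)) := by gcongr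
    _ = c⁻¹ * c * μ (s ∩ t) := (mul_assoc _ _ _).symm
    _ ≤ μ (s ∩ t) := mul_le_of_le_one_left zero_le (ENNReal.inv_mul_le_one c)

lemma le_norm_or_le_norm_of_two_mul_le_norm_sub {E : Type*} [SeminormedAddCommGroup E]
    {x y : E} {c : ℝ} (h : 2 * c ≤ ‖x - y‖) : c ≤ ‖x‖ ∨ c ≤ ‖y‖ := by
  by_contra! hlt
  linarith [norm_sub_le x y]

lemma nonneg_add_iff_nonneg_sub {s t : ℝ} (h : |s| < |t|) : 0 ≤ t + s ↔ 0 ≤ t - s := by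
  obtain ⟨h₁, h₂⟩ := abs_lt.mp h
  rcases le_total 0 t with ht | ht
  · rw [abs_of_nonneg ht] at h₁ h₂
    constructor <;> intro <;> linarith
  · rw [abs_of_nonpos ht] at h₁ h₂
    constructor <;> intro <;> linarith

section InnerProductSpace

variable {E : Type*} [NormedAddCommGroup E] [InnerProductSpace ℝ E]

lemma ae_inner_ne_zero_stdGaussian [FiniteDimensional ℝ E] [MeasurableSpace E] [BorelSpace E]
    {u : E} (hu : u ≠ 0) : ∀ᵐ w ∂ProbabilityTheory.stdGaussian E, ⟪w, u⟫ ≠ 0 := by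
  set μ := ProbabilityTheory.stdGaussian E
  set L := innerSL ℝ u
  have hvar : Var[L; μ].toNNReal ≠ 0 := by
    rw [variance_dual_stdGaussian, innerSL_apply_norm]
    simpa using hu
  have := nullSingletonClass_gaussianReal (μ := μ[L]) hvar
  have h₀ : μ.map L {0} = 0 := by
    rw [IsGaussian.map_eq_gaussianReal L]
    exact measure_singleton 0
  rw [Measure.map_apply L.continuous.measurable (measurableSet_singleton 0)] at h₀
  rw [ae_iff]
  simpa [L, real_inner_comm, Set.preimage] using h₀

lemma inner_reflection_orthogonal_singleton (u w : E) :
    ⟪(ℝ ∙ u)ᗮ.reflection w, u⟫ = -⟪w, u⟫ := by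
  have hu : (ℝ ∙ u)ᗮ.reflection (-u) = u := by
    rw [map_neg, Submodule.reflection_orthogonalComplement_singleton_eq_neg, neg_neg]
  calc ⟪(ℝ ∙ u)ᗮ.reflection w, u⟫ = ⟪(ℝ ∙ u)ᗮ.reflection w, (ℝ ∙ u)ᗮ.reflection (-u)⟫ := by
        rw [hu]
    _ = -⟪w, u⟫ := by rw [LinearIsometryEquiv.inner_map_map, inner_neg_right]

lemma reflection_orthogonal_singleton_apply {v : E} (hv : ‖v‖ = 1) (w : E) :
    (ℝ ∙ v)ᗮ.reflection w = w - (2 * ⟪w, v⟫) • v := by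
  rw [Submodule.reflection_orthogonal_apply, Submodule.reflection_singleton_apply, hv,
    real_inner_comm v w]
  module

lemma reflection_orthogonal_singleton_sub_inner_smul {v : E} (hv : ‖v‖ = 1) (w : E) :
    (ℝ ∙ v)ᗮ.reflection w - ⟪(ℝ ∙ v)ᗮ.reflection w, v⟫ • v = w - ⟪w, v⟫ • v := by
  rw [inner_reflection_orthogonal_singleton, reflection_orthogonal_singleton_apply hv]
  module

lemma inner_smul_right_nonneg_iff {c : ℝ} (hc : 0 < c) (w x : E) :
    0 ≤ ⟪w, c • x⟫ ↔ 0 ≤ ⟪w, x⟫ := by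
  rw [real_inner_smul_right, mul_nonneg_iff_of_pos_left hc]

end InnerProductSpace

section ReluSum

variable {d n : ℕ}

lemma isClosed_sepSet (zbar : Fin n → EuclideanSpace ℝ (Fin d)) (γ : ℝ) (i : Fin n) :
    IsClosed (sepSet zbar γ i) := by
  simp only [sepSet, Set.ofPred_and, Set.ofPred_forall]
  exact (isClosed_le (by fun_prop) continuous_const).inter
    (isClosed_iInter fun j => isClosed_iInter fun _ => isClosed_le continuous_const (by fun_prop))

lemma measurable_reluSum (a : Fin n → ℝ) (z : Fin n → EuclideanSpace ℝ (Fin d)) :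
    Measurable (reluSum a z) := by
  refine Finset.measurable_sum _ fun j _ => ?_
  have hj : MeasurableSet {w : EuclideanSpace ℝ (Fin d) | 0 ≤ ⟪w, z j⟫} :=
    measurableSet_le measurable_const (by fun_prop)
  exact (measurable_const.mul (Measurable.ite hj measurable_const measurable_const)).smul_const _

variable {zbar : Fin n → EuclideanSpace ℝ (Fin d)} {γ : ℝ} {i : Fin n}
  {w w' : EuclideanSpace ℝ (Fin d)}

lemma reflection_mem_sepSet (hi : ‖zbar i‖ = 1) (hw : w ∈ sepSet zbar γ i) :
    (ℝ ∙ zbar i)ᗮ.reflection w ∈ sepSet zbar γ i := by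
  refine ⟨?_, fun j hj => ?_⟩
  · rw [inner_reflection_orthogonal_singleton, abs_neg]
    exact hw.1
  · rw [reflection_orthogonal_singleton_sub_inner_smul hi]
    exact hw.2 j hj

lemma inner_reflection_nonneg_iff_of_mem_sepSet (hγ : 0 < γ) (hzbar : ∀ j, ‖zbar j‖ = 1)
    (hw : w ∈ sepSet zbar γ i) {j : Fin n} (hj : j ≠ i) :
    0 ≤ ⟪(ℝ ∙ zbar i)ᗮ.reflection w, zbar j⟫ ↔ 0 ≤ ⟪w, zbar j⟫ := by
  set t := ⟪w - ⟪w, zbar i⟫ • zbar i, zbar j⟫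
  set s := ⟪w, zbar i⟫ * ⟪zbar i, zbar j⟫
  have hw_eq : ⟪w, zbar j⟫ = t + s := by
    simp only [t, s, inner_sub_left, real_inner_smul_left]
    ring
  have hσw_eq : ⟪(ℝ ∙ zbar i)ᗮ.reflection w, zbar j⟫ = t - s := by
    rw [reflection_orthogonal_singleton_apply (hzbar i)]
    simp only [t, s, inner_sub_left, real_inner_smul_left]
    ring
  have hs : |s| < |t| :=
    calc |s| ≤ γ * 1 := by
          rw [abs_mul]
          gcongr
          · exact hw.1
          · simpa [hzbar] using abs_real_inner_le_norm (zbar i) (zbar j)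
      _ < 2 * γ := by linarith
      _ ≤ |t| := hw.2 j hj
  rw [hw_eq, hσw_eq, nonneg_add_iff_nonneg_sub hs]

variable (a : Fin n → ℝ) (z : Fin n → EuclideanSpace ℝ (Fin d))

lemma reluSum_sub_reluSum (h : ∀ j, j ≠ i → (0 ≤ ⟪w', z j⟫ ↔ 0 ≤ ⟪w, z j⟫)) :
    reluSum a z w - reluSum a z w' =
      (a i * ((if 0 ≤ ⟪w, z i⟫ then 1 else 0) - if 0 ≤ ⟪w', z i⟫ then 1 else 0)) • z i := by
  rw [reluSum, reluSum, ← Finset.sum_sub_distrib, Finset.sum_eq_single i]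
  · rw [← sub_smul, mul_sub]
  · intro j _ hj
    simp only [h j hj, sub_self]
  · simp

lemma norm_reluSum_sub_reluSum (h : ∀ j, j ≠ i → (0 ≤ ⟪w', z j⟫ ↔ 0 ≤ ⟪w, z j⟫))
    (hflip : ⟪w', z i⟫ = -⟪w, z i⟫) (hne : ⟪w, z i⟫ ≠ 0) :
    ‖reluSum a z w - reluSum a z w'‖ = |a i| * ‖z i‖ := by
  rw [reluSum_sub_reluSum a z h, hflip, norm_smul]
  rcases hne.lt_or_gt with hlt | hgt
  · simp [hlt.not_ge, hlt.le]
  · simp [hgt.le, hgt.not_ge]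

lemma le_norm_reluSum_or_le_norm_reluSum_reflection (hγ : 0 < γ) (hz : ∀ j, z j ≠ 0)
    (hzi : 1 / 2 ≤ ‖z i‖) (hzbar : ∀ j, zbar j = ‖z j‖⁻¹ • z j) (hw : w ∈ sepSet zbar γ i)
    (hne : ⟪w, z i⟫ ≠ 0) :
    |a i| / 4 ≤ ‖reluSum a z w‖ ∨ |a i| / 4 ≤ ‖reluSum a z ((ℝ ∙ zbar i)ᗮ.reflection w)‖ := by
  have hnorm : ∀ j, ‖zbar j‖ = 1 := fun j => (hzbar j).symm ▸ norm_smul_inv_norm (hz j)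
  have hpos : ∀ j, 0 < ‖z j‖⁻¹ := fun j => inv_pos.2 (norm_pos_iff.2 (hz j))
  have hagree : ∀ j, j ≠ i →
      (0 ≤ ⟪(ℝ ∙ zbar i)ᗮ.reflection w, z j⟫ ↔ 0 ≤ ⟪w, z j⟫) := fun j hj => by
    simpa only [hzbar j, inner_smul_right_nonneg_iff (hpos j)] using
      inner_reflection_nonneg_iff_of_mem_sepSet hγ hnorm hw hj
  have hflip : ⟪(ℝ ∙ zbar i)ᗮ.reflection w, z i⟫ = -⟪w, z i⟫ := by
    have hzi_eq : z i = ‖z i‖ • zbar i := by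
      rw [hzbar i, smul_smul, mul_inv_cancel₀ (norm_ne_zero_iff.2 (hz i)), one_smul]
    rw [hzi_eq, real_inner_smul_right, real_inner_smul_right,
      inner_reflection_orthogonal_singleton, mul_neg]
  have hdiff := norm_reluSum_sub_reluSum a z hagree hflip hne
  refine le_norm_or_le_norm_of_two_mul_le_norm_sub (hdiff ▸ ?_)
  nlinarith [abs_nonneg (a i)]

end ReluSum

/-- For `z_1, …, z_n` with `1/2 ≤ ‖z_j‖ ≤ 2`, `z̄_j = z_j / ‖z_j‖`, `γ > 0` and a fixed
index `i` with `μ(W_i) > 0`, a standard Gaussian vector `w` satisfies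
`P(‖h(w)‖ ≥ |a_i|/4 ∣ w ∈ W_i) ≥ 1/2`. -/
theorem cond_reluSum_lower {d n : ℕ} (z : Fin n → EuclideanSpace ℝ (Fin d))
    (hz : ∀ j, 1 / 2 ≤ ‖z j‖ ∧ ‖z j‖ ≤ 2)
    (zbar : Fin n → EuclideanSpace ℝ (Fin d)) (hzbar : ∀ j, zbar j = ‖z j‖⁻¹ • z j)
    (γ : ℝ) (hγ : 0 < γ) (i : Fin n) (a : Fin n → ℝ)
    (hpos : 0 < stdGaussian d (sepSet zbar γ i)) :
    1 / 2 ≤ (stdGaussian d)[|sepSet zbar γ i] {w | |a i| / 4 ≤ ‖reluSum a z w‖} := by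
  have hz₀ : ∀ j, z j ≠ 0 := fun j => norm_pos_iff.1 (one_half_pos.trans_le (hz j).1)
  set σ := (ℝ ∙ zbar i)ᗮ.reflection
  have hσ : MeasurePreserving σ (ProbabilityTheory.stdGaussian _)
      (ProbabilityTheory.stdGaussian _) := ⟨σ.continuous.measurable, stdGaussian_map σ⟩
  have hW := (isClosed_sepSet zbar γ i).measurableSet
  have hA : MeasurableSet {w | |a i| / 4 ≤ ‖reluSum a z w‖} :=
    measurableSet_le measurable_const (measurable_reluSum a z).norm
  rw [stdGaussian_eq] at hpos ⊢
  rw [one_div]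
  refine inv_le_cond_of_le_mul hW hpos.ne' (measure_ne_top _ _) <|
    measure_le_two_mul_of_ae_mem_or_mem hσ (hW.inter hA).nullMeasurableSet ?_
  filter_upwards [ae_inner_ne_zero_stdGaussian (hz₀ i)] with w hne hw
  rcases le_norm_reluSum_or_le_norm_reluSum_reflection a z hγ hz₀ (hz i).1 hzbar hw hne
    with h | h
  · exact .inl ⟨hw, h⟩
  · exact .inr ⟨reflection_mem_sepSet ((hzbar i).symm ▸ norm_smul_inv_norm (hz₀ i)) hw, h⟩
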